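/- For each integer d ≥ 3 and λ ≥ 0, define L_d(λ) = max_{m ∈ (0,1]} m^d ( λ + √(2d/(d−1)) · √(M(1+M)) ) with M = M(m) = (d−1)(1−m²)/m². If λ_d ≥ 0 is any sequence with λ_d = √(2 log d) + o(√(log d)) as d → ∞ (equivalently λ_d/√(2 log d) → 1), then liminf_{d→∞} ( L_d(λ_d)² − λ_d² ) ≥ 2. -/

import Mathlib

open Filter

noncomputable section

/-- `M(m) = (d-1)(1-m²)/m²`. -/
def Mfun (d : ℕ) (m : ℝ) : ℝ := ((d:ℝ) - 1) * (1 - m^2) / m^2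

/-- `L_d(λ) = max_{m ∈ (0,1]} m^d (λ + √(2d/(d-1)) √(M(1+M)))`. -/
def Lfun (d : ℕ) (lam : ℝ) : ℝ :=
  ⨆ m : Set.Ioc (0:ℝ) 1,
    (m.1)^d * (lam + Real.sqrt (2*(d:ℝ)/((d:ℝ)-1)) *
      Real.sqrt (Mfun d m.1 * (1 + Mfun d m.1)))

/-!
Lower bound: take `m² = 1 - 1/(d log d)`. Bernoulli's inequality gives `m^d ≥ √(1 - 1/log d)`,
while the noise term is at least `√(2/log d)`. For `λ ≈ √(2 log d)` the spike thus loses about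
`λ²/log d ≈ 2` in `L_d(λ)² - λ²` and the cross term gains about `2λ√(2/log d) ≈ 4`.

Upper bound: the second-order Bernoulli inequality gives `m^(2d) (1 + M(1+M)/2) ≤ 1`, hence
`L_d(λ)² ≤ λ² + 8` by Cauchy–Schwarz. This boundedness is needed: the `liminf` of a real
sequence tending to `+∞` is the junk value `0`.
-/

theorem one_add_mul_add_choose_two_mul_sq_le_pow {x : ℝ} (hx : 0 ≤ x) (n : ℕ) :
    1 + n * x + n.choose 2 * x ^ 2 ≤ (1 + x) ^ n := by
  induction n with
  | zero => simp
  | succ n ih =>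
    have hchoose : ((n + 1).choose 2 : ℝ) = n.choose 2 + n := by
      rw [Nat.choose_succ_succ', Nat.choose_one_right, Nat.cast_add, add_comm]
    rw [pow_succ (1 + x) n, hchoose]
    push_cast
    nlinarith [mul_le_mul_of_nonneg_right ih (by linarith : (0 : ℝ) ≤ 1 + x),
      mul_nonneg (Nat.cast_nonneg (α := ℝ) (n.choose 2)) (pow_nonneg hx 3)]

def Lobjective (d : ℕ) (lam m : ℝ) : ℝ :=
  m ^ d * (lam + Real.sqrt (2 * (d:ℝ) / ((d:ℝ) - 1)) * Real.sqrt (Mfun d m * (1 + Mfun d m)))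

theorem Lfun_eq_iSup (d : ℕ) (lam : ℝ) :
    Lfun d lam = ⨆ m : Set.Ioc (0:ℝ) 1, Lobjective d lam m := rfl

theorem Mfun_nonneg {d : ℕ} (hd : 1 ≤ d) {m : ℝ} (hm : m ∈ Set.Ioc (0:ℝ) 1) : 0 ≤ Mfun d m := by
  have hd' : (1:ℝ) ≤ d := by exact_mod_cast hd
  obtain ⟨hm0, hm1⟩ := hm
  unfold Mfun
  exact div_nonneg (mul_nonneg (by linarith) (by nlinarith)) (by positivity)

theorem pow_two_mul_mul_one_add_Mfun_le {d : ℕ} (hd : 1 ≤ d) {m : ℝ}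
    (hm : m ∈ Set.Ioc (0:ℝ) 1) :
    m ^ (2 * d) * (1 + Mfun d m * (1 + Mfun d m) / 2) ≤ 1 := by
  obtain ⟨hm0, hm1⟩ := hm
  set x := 1 / m ^ 2 - 1 with hxdef
  have hx : 0 ≤ x := by
    rw [hxdef, sub_nonneg, le_div_iff₀ (by positivity)]; nlinarith
  have hM : Mfun d m = ((d:ℝ) - 1) * x := by
    rw [Mfun, hxdef]; field_simp
  have hmx : m ^ 2 * (1 + x) = 1 := by rw [hxdef]; field_simp; ring
  have hd' : (1:ℝ) ≤ d := by exact_mod_cast hd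
  have hbern := one_add_mul_add_choose_two_mul_sq_le_pow hx d
  rw [Nat.cast_choose_two] at hbern
  calc m ^ (2 * d) * (1 + Mfun d m * (1 + Mfun d m) / 2)
      ≤ m ^ (2 * d) * (1 + x) ^ d := by
        gcongr
        rw [hM]
        nlinarith [mul_nonneg hx hx]
    _ = 1 := by rw [pow_mul, ← mul_pow, hmx, one_pow]

theorem Lobjective_sq_le {d : ℕ} (hd : 2 ≤ d) (lam : ℝ) {m : ℝ} (hm : m ∈ Set.Ioc (0:ℝ) 1) :
    Lobjective d lam m ^ 2 ≤ lam ^ 2 + 8 := by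
  have hd' : (2:ℝ) ≤ d := by exact_mod_cast hd
  set c := Real.sqrt (2 * (d:ℝ) / ((d:ℝ) - 1))
  set M := Mfun d m
  set N := Real.sqrt (M * (1 + M))
  have hM : 0 ≤ M := Mfun_nonneg (by omega) hm
  have hc : c ^ 2 ≤ 4 := by
    rw [Real.sq_sqrt (div_nonneg (by linarith) (by linarith)), div_le_iff₀ (by linarith)]; linarith
  have hN : N ^ 2 = M * (1 + M) := Real.sq_sqrt (by positivity)
  -- Cauchy–Schwarz for `(λ, √2 c) · (1, N/√2)`.
  have hcs : (lam + c * N) ^ 2 ≤ (lam ^ 2 + 2 * c ^ 2) * (1 + N ^ 2 / 2) := by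
    nlinarith [sq_nonneg (lam * N - 2 * c)]
  have hpow := pow_two_mul_mul_one_add_Mfun_le (d := d) (by omega) hm
  have hm0 : 0 ≤ m ^ (2 * d) := pow_nonneg hm.1.le _
  calc Lobjective d lam m ^ 2 = m ^ (2 * d) * (lam + c * N) ^ 2 := by
        rw [Lobjective, mul_pow, pow_mul']
    _ ≤ m ^ (2 * d) * ((lam ^ 2 + 2 * c ^ 2) * (1 + M * (1 + M) / 2)) := by
        rw [← hN]; gcongr
    _ = (m ^ (2 * d) * (1 + M * (1 + M) / 2)) * (lam ^ 2 + 2 * c ^ 2) := by ring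
    _ ≤ 1 * (lam ^ 2 + 2 * c ^ 2) := by gcongr
    _ ≤ lam ^ 2 + 8 := by linarith

theorem Lfun_le_sqrt {d : ℕ} (hd : 2 ≤ d) (lam : ℝ) :
    Lfun d lam ≤ Real.sqrt (lam ^ 2 + 8) := by
  have : Nonempty (Set.Ioc (0:ℝ) 1) := ⟨⟨1, by norm_num⟩⟩
  rw [Lfun_eq_iSup]
  exact ciSup_le fun m ↦ Real.le_sqrt_of_sq_le (Lobjective_sq_le hd lam m.2)

theorem bddAbove_range_Lobjective {d : ℕ} (hd : 2 ≤ d) (lam : ℝ) :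
    BddAbove (Set.range fun m : Set.Ioc (0:ℝ) 1 ↦ Lobjective d lam m) :=
  ⟨_, Set.forall_mem_range.2 fun m ↦ Real.le_sqrt_of_sq_le (Lobjective_sq_le hd lam m.2)⟩

theorem sqrt_one_sub_mul_le_Lfun {d : ℕ} (hd : 2 ≤ d) {lam t : ℝ} (hlam : 0 ≤ lam)
    (ht0 : 0 ≤ t) (htd : t < d) :
    Real.sqrt (1 - t) * (lam + Real.sqrt (2 * t)) ≤ Lfun d lam := by
  have hd' : (2:ℝ) ≤ d := by exact_mod_cast hd
  have hx0 : 0 ≤ t / d := by positivity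
  have hx1 : t / d < 1 := (div_lt_one (by linarith)).2 htd
  set m := Real.sqrt (1 - t / d)
  have hm2 : m ^ 2 = 1 - t / d := Real.sq_sqrt (by linarith)
  have hm : m ∈ Set.Ioc (0:ℝ) 1 :=
    ⟨Real.sqrt_pos.2 (by linarith), Real.sqrt_le_one.2 (by linarith)⟩
  have hspike : Real.sqrt (1 - t) ≤ m ^ d := by
    have hbern := one_add_mul_le_pow (by linarith : -2 ≤ -(t / d)) d
    rw [← Real.sqrt_sq (pow_nonneg hm.1.le d), ← pow_mul, mul_comm, pow_mul, hm2]
    refine Real.sqrt_le_sqrt (le_of_eq_of_le ?_ hbern)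
    field_simp; ring
  have hnoise : Real.sqrt (2 * t) ≤
      Real.sqrt (2 * (d:ℝ) / ((d:ℝ) - 1)) * Real.sqrt (Mfun d m * (1 + Mfun d m)) := by
    have hM : Mfun d m = ((d:ℝ) - 1) * (t / d) / (1 - t / d) := by
      rw [Mfun, hm2, sub_sub_cancel]
    have hd1 : (d:ℝ) - 1 ≠ 0 := by linarith
    have hc0 : 0 ≤ 2 * (d:ℝ) / ((d:ℝ) - 1) := div_nonneg (by linarith) (by linarith)
    have hM0 : 0 ≤ Mfun d m := Mfun_nonneg (by omega) hm
    have hcM : 2 * (d:ℝ) / ((d:ℝ) - 1) * Mfun d m = 2 * t / (1 - t / d) := by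
      rw [hM]; field_simp
    have hcM' : 2 * t ≤ 2 * (d:ℝ) / ((d:ℝ) - 1) * Mfun d m := by
      rw [hcM, le_div_iff₀ (by linarith)]; nlinarith
    rw [← Real.sqrt_mul hc0]
    refine Real.sqrt_le_sqrt (hcM'.trans ?_)
    gcongr
    nlinarith
  calc Real.sqrt (1 - t) * (lam + Real.sqrt (2 * t)) ≤ Lobjective d lam m := by
        unfold Lobjective
        gcongr
    _ ≤ Lfun d lam := le_ciSup (bddAbove_range_Lobjective hd lam) ⟨m, hm⟩

theorem Lfun_sq_sub_sq_le {d : ℕ} (hd : 2 ≤ d) {lam : ℝ} (hlam : 0 ≤ lam) :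
    Lfun d lam ^ 2 - lam ^ 2 ≤ 8 := by
  have hL0 : 0 ≤ Lfun d lam :=
    hlam.trans (by simpa using sqrt_one_sub_mul_le_Lfun hd hlam le_rfl (by positivity))
  have hsq := pow_le_pow_left₀ hL0 (Lfun_le_sqrt hd lam) 2
  rw [Real.sq_sqrt (by positivity)] at hsq
  linarith

theorem le_Lfun_sq_sub_sq {d : ℕ} (hd : 3 ≤ d) {lam : ℝ} (hlam : 0 ≤ lam) :
    4 * (lam / Real.sqrt (2 * Real.log d)) * (1 - (Real.log d)⁻¹)
      - 2 * (lam / Real.sqrt (2 * Real.log d)) ^ 2 ≤ Lfun d lam ^ 2 - lam ^ 2 := by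
  have hd' : (3:ℝ) ≤ d := by exact_mod_cast hd
  have hlog : 1 ≤ Real.log d := by
    rw [Real.le_log_iff_exp_le (by linarith)]
    linarith [Real.exp_one_lt_d9]
  set t := (Real.log d)⁻¹
  have ht0 : 0 ≤ t := by positivity
  have ht1 : t ≤ 1 := inv_le_one_of_one_le₀ hlog
  have htlog : t * Real.log d = 1 := inv_mul_cancel₀ (by linarith)
  set u := Real.sqrt (2 * Real.log d)
  set w := Real.sqrt (2 * t)
  set r := lam / u
  have hu0 : 0 < u := Real.sqrt_pos.2 (by linarith)
  have huw : u * w = 2 := by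
    rw [← Real.sqrt_mul (by linarith), show 2 * Real.log d * (2 * t) = 2 ^ 2 by
      linear_combination 4 * htlog]
    exact Real.sqrt_sq (by norm_num)
  have hlam_eq : lam = r * u := (div_mul_cancel₀ lam hu0.ne').symm
  have hlamw : lam * w = 2 * r := by rw [hlam_eq, mul_assoc, huw]; ring
  have htlam : t * lam ^ 2 = 2 * r ^ 2 := by
    rw [hlam_eq, mul_pow, Real.sq_sqrt (by linarith)]; linear_combination 2 * r ^ 2 * htlog
  have hA0 : 0 ≤ Real.sqrt (1 - t) * (lam + w) := by positivity
  have hL := sqrt_one_sub_mul_le_Lfun (by omega) hlam ht0 (by linarith : t < d)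
  calc 4 * r * (1 - t) - 2 * r ^ 2 ≤ (1 - t) * (lam + w) ^ 2 - lam ^ 2 := by
        nlinarith [mul_nonneg (sub_nonneg.2 ht1) (sq_nonneg w)]
    _ = (Real.sqrt (1 - t) * (lam + w)) ^ 2 - lam ^ 2 := by
        rw [mul_pow, Real.sq_sqrt (by linarith)]
    _ ≤ Lfun d lam ^ 2 - lam ^ 2 := by gcongr

/-- **Asymptotic gain of the injective-norm lower bound.** If `λ_d ≥ 0` satisfies
`λ_d = √(2 log d) + o(√(log d))`, i.e. `λ_d/√(2 log d) → 1`, then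
`liminf_{d→∞} (L_d(λ_d)² - λ_d²) ≥ 2`. -/
theorem Lfun_asymptotic_gain
    (lam : ℕ → ℝ) (hnonneg : ∀ d, 0 ≤ lam d)
    (hasymp : Tendsto (fun d : ℕ => lam d / Real.sqrt (2 * Real.log d)) atTop (nhds 1)) :
    2 ≤ atTop.liminf (fun d : ℕ => (Lfun d (lam d))^2 - (lam d)^2) := by
  have hinvlog : Tendsto (fun d : ℕ ↦ (Real.log d)⁻¹) atTop (nhds 0) :=
    (Real.tendsto_log_atTop.comp tendsto_natCast_atTop_atTop).inv_tendsto_atTop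
  have hlower : Tendsto (fun d : ℕ ↦ 4 * (lam d / Real.sqrt (2 * Real.log d))
      * (1 - (Real.log d)⁻¹) - 2 * (lam d / Real.sqrt (2 * Real.log d)) ^ 2) atTop (nhds 2) := by
    convert ((hasymp.const_mul 4).mul (tendsto_const_nhds (x := 1).sub hinvlog)).sub
      ((hasymp.pow 2).const_mul 2) using 2
    norm_num
  calc (2:ℝ) = _ := hlower.liminf_eq.symm
    _ ≤ _ := liminf_le_liminf
      (eventually_atTop.2 ⟨3, fun d hd ↦ le_Lfun_sq_sub_sq hd (hnonneg d)⟩)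
      hlower.isBoundedUnder_ge
      (isCoboundedUnder_ge_of_eventually_le _
        (eventually_atTop.2 ⟨2, fun d hd ↦ Lfun_sq_sub_sq_le hd (hnonneg d)⟩))

end
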